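/- arXiv:0901.3706 — 3 statements merged into one kernel-verified Lean document; each statement's English description precedes it below -/
import Mathlib

section
/- Conversely, if Λ̃ ∈ R* has Hankel operator of rank r with B (a monomial set connected to 1, |B| = r) a basis of A_{Λ̃}, then the multiplication matrices M_i = (H^B_{Λ̃})^{-1} H^B_{x_i⋆Λ̃} pairwise commute and H^B_{Λ̃} is invertible. -/
open MvPolynomial

/-- The Hankel operator `H_Λ : p ↦ (q ↦ Λ(pq))`. -/
noncomputable def hankelOp (K : Type*) [Field K] (n : ℕ)
    (Λ : Module.Dual K (MvPolynomial (Fin n) K)) :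
    MvPolynomial (Fin n) K →ₗ[K] Module.Dual K (MvPolynomial (Fin n) K) :=
  (LinearMap.mul K (MvPolynomial (Fin n) K)).compr₂ Λ

/-- The kernel ideal `I_Λ = {p : ∀ q, Λ(pq) = 0}`. -/
def hankelIdeal (K : Type*) [Field K] (n : ℕ)
    (Λ : Module.Dual K (MvPolynomial (Fin n) K)) : Ideal (MvPolynomial (Fin n) K) where
  carrier := {p | ∀ q, Λ (p * q) = 0}
  add_mem' := by
    intro a b ha hb q
    rw [Set.mem_setOf_eq] at ha hb
    rw [add_mul, map_add, ha q, hb q, add_zero]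
  zero_mem' := by
    intro q
    rw [zero_mul, map_zero]
  smul_mem' := by
    intro c p hp q
    rw [Set.mem_setOf_eq] at hp
    have h : (c • p) * q = p * (c * q) := by rw [smul_eq_mul]; ring
    rw [h]
    exact hp _

/-- The evaluation functional `1_ζ : p ↦ p(ζ)`. -/
noncomputable def evalDual (K : Type*) [Field K] (n : ℕ) (ζ : Fin n → K) :
    Module.Dual K (MvPolynomial (Fin n) K) :=
  (MvPolynomial.aeval ζ).toLinearMap

/-!
The form `(p, q) ↦ Λ(pq)` descends to a nondegenerate symmetric bilinear form on
`A_Λ = R ⧸ I_Λ`, and `H^B_Λ` is its Gram matrix in the basis `B`, hence invertible. Since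
`Λ(x_i b b') = ⟨b, x_i b'⟩`, the matrix `H^B_{x_i⋆Λ}` factors as `H^B_Λ M_i`, with `M_i` the
matrix of multiplication by `x_i` on `A_Λ`; these commute because `A_Λ` is commutative.
-/

section HankelForm

open Submodule

variable {K A : Type*} [Field K] [CommRing A] [Algebra K A]

namespace Ideal

noncomputable def quotientBasisOfIsCompl {ι : Type*} {m : ι → A} (hm : LinearIndependent K m)
    (I : Ideal A) (h : IsCompl (Submodule.span K (Set.range m)) (I.restrictScalars K)) :
    Module.Basis ι K (A ⧸ I) :=
  (Module.Basis.span hm).map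
    ((quotientEquivOfIsCompl _ _ h.symm).symm.trans (Quotient.restrictScalarsEquiv K I))

@[simp]
theorem quotientBasisOfIsCompl_apply {ι : Type*} {m : ι → A} (hm : LinearIndependent K m)
    (I : Ideal A) (h : IsCompl (Submodule.span K (Set.range m)) (I.restrictScalars K)) (j : ι) :
    quotientBasisOfIsCompl hm I h j = Ideal.Quotient.mk I (m j) := by
  simp [quotientBasisOfIsCompl, Module.Basis.span_apply]

end Ideal

variable (Λ : Module.Dual K A) (I : Ideal A) (hI : ∀ p ∈ I, Λ p = 0)

noncomputable def hankelForm : LinearMap.BilinForm K (A ⧸ I) :=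
  (LinearMap.mul K (A ⧸ I)).compr₂
    ((I.restrictScalars K).liftQ Λ hI ∘ₗ (Quotient.restrictScalarsEquiv K I).symm)

@[simp]
theorem hankelForm_mk (p q : A) :
    hankelForm Λ I hI (Ideal.Quotient.mk I p) (Ideal.Quotient.mk I q) = Λ (p * q) :=
  rfl

theorem hankelForm_comm (u v : A ⧸ I) : hankelForm Λ I hI u v = hankelForm Λ I hI v u := by
  simp only [hankelForm, LinearMap.compr₂_apply, LinearMap.mul_apply', mul_comm]

theorem hankelForm_nondegenerate (hI' : ∀ p, (∀ q, Λ (p * q) = 0) → p ∈ I) :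
    (hankelForm Λ I hI).Nondegenerate := by
  have hsep : (hankelForm Λ I hI).SeparatingLeft := by
    intro u hu
    obtain ⟨p, rfl⟩ := Ideal.Quotient.mk_surjective u
    refine Ideal.Quotient.eq_zero_iff_mem.mpr (hI' p fun q => ?_)
    simpa using hu (Ideal.Quotient.mk I q)
  exact ⟨hsep, fun v hv => hsep v fun u => hankelForm_comm Λ I hI v u ▸ hv u⟩

theorem toMatrix_hankelForm_mul_leftMulMatrix {ι : Type*} [Fintype ι] [DecidableEq ι]
    (β : Module.Basis ι K (A ⧸ I)) (x : A ⧸ I) :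
    LinearMap.BilinForm.toMatrix β (hankelForm Λ I hI) * Algebra.leftMulMatrix β x =
      Matrix.of fun j k => hankelForm Λ I hI (β j) (x * β k) := by
  rw [Algebra.leftMulMatrix_apply, ← LinearMap.BilinForm.toMatrix_compRight]
  ext j k
  simp [LinearMap.BilinForm.toMatrix_apply]

end HankelForm

theorem ker_hankelOp (K : Type*) [Field K] (n : ℕ) (Λ : Module.Dual K (MvPolynomial (Fin n) K)) :
    LinearMap.ker (hankelOp K n Λ) = (hankelIdeal K n Λ).restrictScalars K := by
  ext p
  simp [hankelOp, LinearMap.ext_iff, hankelIdeal]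

theorem commuting_multiplication_of_flat_extension_general (K : Type*) [Field K] (n r : ℕ)
    (b : Fin r → (Fin n →₀ ℕ))
    (hinj : Function.Injective b)
    (Λt : Module.Dual K (MvPolynomial (Fin n) K))
    (hbasis : IsCompl
      (Submodule.span K (Set.range fun j => (monomial (b j) (1 : K) : MvPolynomial (Fin n) K)))
      (LinearMap.ker (hankelOp K n Λt)))
    (HB : Matrix (Fin r) (Fin r) K)
    (hHB : HB = Matrix.of fun j k => Λt ((monomial (b j) 1) * monomial (b k) 1))
    (HBx : Fin n → Matrix (Fin r) (Fin r) K)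
    (hHBx : ∀ i, HBx i = Matrix.of fun j k =>
      Λt (X i * ((monomial (b j) 1) * monomial (b k) 1))) :
    IsUnit HB.det ∧
    ∀ i i' : Fin n,
      (HB⁻¹ * HBx i) * (HB⁻¹ * HBx i') = (HB⁻¹ * HBx i') * (HB⁻¹ * HBx i) := by
  set I := hankelIdeal K n Λt
  have hI : ∀ p ∈ I, Λt p = 0 := fun p hp => by simpa using hp 1
  have hmono : LinearIndependent K fun j => (monomial (b j) (1 : K) : MvPolynomial (Fin n) K) :=
    (basisMonomials (Fin n) K).linearIndependent.comp b hinj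
  let β := Ideal.quotientBasisOfIsCompl hmono I (ker_hankelOp K n Λt ▸ hbasis)
  let L : Fin n → Matrix (Fin r) (Fin r) K :=
    fun i => Algebra.leftMulMatrix β (Ideal.Quotient.mk I (X i))
  have hHB_eq : HB = LinearMap.BilinForm.toMatrix β (hankelForm Λt I hI) := by
    ext j k
    simp [hHB, β, LinearMap.BilinForm.toMatrix_apply]
  have hHBx_eq : ∀ i, HBx i = HB * L i := by
    intro i
    rw [hHB_eq, toMatrix_hankelForm_mul_leftMulMatrix, hHBx]
    ext j k
    simp [β, ← map_mul, mul_left_comm]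
  have hdet : IsUnit HB.det := by
    rw [isUnit_iff_ne_zero, hHB_eq,
      ← LinearMap.BilinForm.nondegenerate_iff_det_ne_zero]
    exact hankelForm_nondegenerate Λt I hI fun p hp => hp
  refine ⟨hdet, fun i i' => ?_⟩
  simp only [hHBx_eq, Matrix.nonsing_inv_mul_cancel_left (h := hdet)]
  exact ((Commute.all _ _).map (Algebra.leftMulMatrix β)).eq

/-- Conversely, if `H_Λ̃` has rank `r` with `B` (connected to 1, `|B| = r`) a basis of
`A_Λ̃`, then `H^B_Λ̃` is invertible and the multiplication matrices
`M_i = (H^B_Λ̃)⁻¹ H^B_{x_i ⋆ Λ̃}` pairwise commute. -/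
theorem commuting_multiplication_of_flat_extension (K : Type*) [Field K] (n r : ℕ)
    (b : Fin r → (Fin n →₀ ℕ))
    (hinj : Function.Injective b)
    (hconn : ∀ j, b j = 0 ∨ ∃ (i : Fin n) (j' : Fin r), b j = Finsupp.single i 1 + b j')
    (Λt : Module.Dual K (MvPolynomial (Fin n) K))
    (hfin : Module.Finite K ↥(LinearMap.range (hankelOp K n Λt)))
    (hrank : Module.finrank K ↥(LinearMap.range (hankelOp K n Λt)) = r)
    (hbasis : IsCompl
      (Submodule.span K (Set.range fun j => (monomial (b j) (1 : K) : MvPolynomial (Fin n) K)))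
      (LinearMap.ker (hankelOp K n Λt)))
    (HB : Matrix (Fin r) (Fin r) K)
    (hHB : HB = Matrix.of fun j k => Λt ((monomial (b j) 1) * monomial (b k) 1))
    (HBx : Fin n → Matrix (Fin r) (Fin r) K)
    (hHBx : ∀ i, HBx i = Matrix.of fun j k =>
      Λt (X i * ((monomial (b j) 1) * monomial (b k) 1))) :
    IsUnit HB.det ∧
    ∀ i i' : Fin n,
      (HB⁻¹ * HBx i) * (HB⁻¹ * HBx i') = (HB⁻¹ * HBx i') * (HB⁻¹ * HBx i) :=
  commuting_multiplication_of_flat_extension_general K n r b hinj Λt hbasis HB hHB HBx hHBx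
end

section
/- Let Λ = Σ_{i=1}^r λ_i 1_{ζ_i} with λ_i ≠ 0 and ζ_i ∈ K^n pairwise distinct, and let e_1,...,e_r ∈ R be interpolation polynomials with e_i(ζ_j) = δ_{ij}. Then the images of e_1,...,e_r form a basis of A_Λ = R/I_Λ, and for a ∈ R the multiplication operator M_a is diagonal in this basis with M_a(e_i) = a(ζ_i) e_i. -/
open MvPolynomial

/-!
Since `Λ(pq) = Σ λ_j p(ζ_j) q(ζ_j)`, testing against `q = e_i` shows that `I_Λ` is the ideal of
polynomials vanishing at all the `ζ_i`, i.e. the kernel of `p ↦ (p(ζ_i))_i : R → K^r`. This map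
is onto because `e_i ↦ δ_i`, so `A_Λ ≅ K^r` as `K`-algebras, with the `e_i` corresponding to the
standard idempotents; multiplication on `K^r` is coordinatewise, which gives the eigenvalues.
-/

section

variable {K : Type*} [Field K] {n : ℕ} {ι : Type*}

theorem sum_smul_evalDual_apply [Fintype ι] (lam : ι → K) (ζ : ι → Fin n → K)
    (p : MvPolynomial (Fin n) K) :
    (∑ i, lam i • evalDual K n (ζ i)) p = ∑ i, lam i * eval (ζ i) p := by
  simp only [LinearMap.sum_apply, LinearMap.smul_apply, smul_eq_mul]
  rfl

noncomputable def evalPoints (ζ : ι → Fin n → K) : MvPolynomial (Fin n) K →ₐ[K] ι → K :=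
  AlgHom.pi fun i => aeval (ζ i)

theorem evalPoints_apply (ζ : ι → Fin n → K) (p : MvPolynomial (Fin n) K) (i : ι) :
    evalPoints ζ p i = eval (ζ i) p :=
  rfl

variable [DecidableEq ι] {ζ : ι → Fin n → K} {e : ι → MvPolynomial (Fin n) K}

theorem evalPoints_interpolation (he : ∀ i j, eval (ζ j) (e i) = if i = j then 1 else 0)
    (i : ι) : evalPoints ζ (e i) = Pi.single i 1 := by
  ext j
  simp only [evalPoints_apply, he, Pi.single_apply, eq_comm]

variable [Fintype ι]

theorem evalPoints_surjective (he : ∀ i j, eval (ζ j) (e i) = if i = j then 1 else 0) :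
    Function.Surjective (evalPoints ζ) := fun f =>
  ⟨∑ i, f i • e i, by
    simp only [map_sum, map_smul, evalPoints_interpolation he]
    exact (pi_eq_sum_univ' f).symm⟩

theorem hankelIdeal_sum_smul_evalDual {lam : ι → K} (hlam : ∀ i, lam i ≠ 0)
    (he : ∀ i j, eval (ζ j) (e i) = if i = j then 1 else 0) :
    hankelIdeal K n (∑ i, lam i • evalDual K n (ζ i)) = RingHom.ker (evalPoints ζ) := by
  ext p
  simp only [RingHom.mem_ker, funext_iff, evalPoints_apply, Pi.zero_apply]
  constructor
  · intro hp i
    have h := hp (e i)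
    simp only [sum_smul_evalDual_apply, map_mul, he, mul_ite, mul_one, mul_zero,
      Fintype.sum_ite_eq] at h
    exact (mul_eq_zero.mp h).resolve_left (hlam i)
  · intro hp q
    simp [sum_smul_evalDual_apply, hp]

noncomputable def quotientEvalPointsEquiv
    (he : ∀ i j, eval (ζ j) (e i) = if i = j then 1 else 0) :
    (MvPolynomial (Fin n) K ⧸ RingHom.ker (evalPoints ζ)) ≃ₐ[K] (ι → K) :=
  Ideal.quotientKerAlgEquivOfSurjective (evalPoints_surjective he)

theorem quotientEvalPointsEquiv_mk (he : ∀ i j, eval (ζ j) (e i) = if i = j then 1 else 0)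
    (p : MvPolynomial (Fin n) K) :
    quotientEvalPointsEquiv he (Ideal.Quotient.mk _ p) = evalPoints ζ p :=
  rfl

noncomputable def interpolationBasis (he : ∀ i j, eval (ζ j) (e i) = if i = j then 1 else 0) :
    Module.Basis ι K (MvPolynomial (Fin n) K ⧸ RingHom.ker (evalPoints ζ)) :=
  (Pi.basisFun K ι).map (quotientEvalPointsEquiv he).symm.toLinearEquiv

theorem interpolationBasis_apply (he : ∀ i j, eval (ζ j) (e i) = if i = j then 1 else 0)
    (i : ι) : interpolationBasis he i = Ideal.Quotient.mk _ (e i) := by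
  rw [interpolationBasis, Module.Basis.map_apply, Pi.basisFun_apply, AlgEquiv.toLinearEquiv_apply,
    AlgEquiv.symm_apply_eq, quotientEvalPointsEquiv_mk, evalPoints_interpolation he]

theorem mk_mul_interpolation (he : ∀ i j, eval (ζ j) (e i) = if i = j then 1 else 0)
    (a : MvPolynomial (Fin n) K) (i : ι) :
    Ideal.Quotient.mk (RingHom.ker (evalPoints ζ)) (a * e i)
      = eval (ζ i) a • Ideal.Quotient.mk _ (e i) := by
  apply (quotientEvalPointsEquiv he).injective
  ext j
  rw [map_smul, quotientEvalPointsEquiv_mk, quotientEvalPointsEquiv_mk, Pi.smul_apply,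
    evalPoints_apply, evalPoints_apply, map_mul, he, smul_eq_mul]
  split_ifs with hij
  · rw [hij]
  · rw [mul_zero, mul_zero]

end

theorem interpolation_basis_diagonalizes_multiplication_general (K : Type*) [Field K] (n r : ℕ)
    (Λ : Module.Dual K (MvPolynomial (Fin n) K))
    (lam : Fin r → K) (ζ : Fin r → (Fin n → K))
    (hlam : ∀ i, lam i ≠ 0)
    (hΛ : Λ = ∑ i, lam i • evalDual K n (ζ i))
    (e : Fin r → MvPolynomial (Fin n) K)
    (he : ∀ i j, MvPolynomial.eval (ζ j) (e i) = if i = j then 1 else 0) :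
    LinearIndependent K (fun i => Ideal.Quotient.mk (hankelIdeal K n Λ) (e i)) ∧
    Submodule.span K (Set.range fun i => Ideal.Quotient.mk (hankelIdeal K n Λ) (e i)) = ⊤ ∧
    ∀ (a : MvPolynomial (Fin n) K) (i : Fin r),
      Ideal.Quotient.mk (hankelIdeal K n Λ) (a * e i)
        = MvPolynomial.eval (ζ i) a • Ideal.Quotient.mk (hankelIdeal K n Λ) (e i) := by
  subst hΛ
  rw [hankelIdeal_sum_smul_evalDual hlam he]
  have hbasis : ⇑(interpolationBasis he) = fun i => Ideal.Quotient.mk _ (e i) :=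
    funext (interpolationBasis_apply he)
  rw [← hbasis]
  exact ⟨(interpolationBasis he).linearIndependent, (interpolationBasis he).span_eq,
    mk_mul_interpolation he⟩

/-- If `Λ = Σ λ_i 1_{ζ_i}` and `e_i` are interpolation polynomials at the `ζ_i`, then the
images of the `e_i` form a basis of `A_Λ` in which multiplication by `a` is diagonal with
`M_a(e_i) = a(ζ_i) e_i`. -/
theorem interpolation_basis_diagonalizes_multiplication (K : Type*) [Field K] (n r : ℕ)
    (Λ : Module.Dual K (MvPolynomial (Fin n) K))
    (lam : Fin r → K) (ζ : Fin r → (Fin n → K))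
    (hlam : ∀ i, lam i ≠ 0) (hinj : Function.Injective ζ)
    (hΛ : Λ = ∑ i, lam i • evalDual K n (ζ i))
    (e : Fin r → MvPolynomial (Fin n) K)
    (he : ∀ i j, MvPolynomial.eval (ζ j) (e i) = if i = j then 1 else 0) :
    LinearIndependent K (fun i => Ideal.Quotient.mk (hankelIdeal K n Λ) (e i)) ∧
    Submodule.span K (Set.range fun i => Ideal.Quotient.mk (hankelIdeal K n Λ) (e i)) = ⊤ ∧
    ∀ (a : MvPolynomial (Fin n) K) (i : Fin r),
      Ideal.Quotient.mk (hankelIdeal K n Λ) (a * e i)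
        = MvPolynomial.eval (ζ i) a • Ideal.Quotient.mk (hankelIdeal K n Λ) (e i) :=
  interpolation_basis_diagonalizes_multiplication_general K n r Λ lam ζ hlam hΛ e he
end

section
/- Let B be a finite set of monomials connected to 1 and Λ ∈ R* such that the matrices M_i representing multiplication by x_i modulo the span K of the border relations {x_i m − M_i(m) : m ∈ B, 1 ≤ i ≤ n} pairwise commute. Define Λ̃(p) = Λ(p(M)(1)), where p(M) is obtained by substituting x_i by M_i. Then Λ̃(bb') = Λ(bb') for all b, b' ∈ B. -/
open MvPolynomial

/-!
Write `M^α = ∏ M_i ^ α_i`, well defined because the `M_i` commute. Since `B` is connected to 1,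
induction along a chain `1, x_{i₁}, x_{i₁} x_{i₂}, …, b` inside `B` gives both `M^b 1 = b`
(along the chain `M_i` acts as multiplication by `x_i`) and `Λ (M^b v) = Λ (b v)` for all
`v ∈ ⟨B⟩` (peel off one `M_i` with the compatibility of `Λ`; it suffices to check this on the
spanning set `B`). Hence `Λ̃ (b b') = Λ (M^b (M^b' 1)) = Λ (M^b b') = Λ (b b')`.
-/

section EvalMonomial

variable {σ A : Type*} [Fintype σ] [Monoid A] (M : σ → A) (hM : ∀ i i', Commute (M i) (M i'))

def evalMonomial (α : σ →₀ ℕ) : A :=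
  Finset.univ.noncommProd (fun i => M i ^ α i) (fun i _ i' _ _ => (hM i i').pow_pow _ _)

theorem evalMonomial_zero : evalMonomial M hM 0 = 1 :=
  (Finset.noncommProd_eq_pow_card _ _ _ 1 fun _ _ => pow_zero _).trans (one_pow _)

theorem evalMonomial_add (α β : σ →₀ ℕ) :
    evalMonomial M hM (α + β) = evalMonomial M hM α * evalMonomial M hM β := by
  simp only [evalMonomial, Finsupp.add_apply, pow_add]
  exact Finset.noncommProd_mul_distrib _ _ _ _ fun i _ i' _ _ => (hM i i').pow_pow _ _

theorem evalMonomial_single_one (i : σ) :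
    evalMonomial M hM (Finsupp.single i 1) = M i := by
  classical
  have hrest := Finset.noncommProd_eq_pow_card (Finset.univ.erase i)
    (fun i' => M i' ^ Finsupp.single i 1 i') (fun i' _ i'' _ _ => (hM i' i'').pow_pow _ _) 1
    fun i' hi' => by simp [(Finset.ne_of_mem_erase hi').symm]
  refine (Finset.mul_noncommProd_erase _ (Finset.mem_univ i) _ _).symm.trans ?_
  rw [hrest]
  simp

theorem commute_evalMonomial (i : σ) (α : σ →₀ ℕ) : Commute (M i) (evalMonomial M hM α) :=
  Finset.noncommProd_commute _ _ _ _ fun i' _ => (hM i i').pow_right _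

theorem evalMonomial_single_one_add (i : σ) (α : σ →₀ ℕ) :
    evalMonomial M hM (Finsupp.single i 1 + α) = M i * evalMonomial M hM α := by
  rw [evalMonomial_add, evalMonomial_single_one]

end EvalMonomial

def IsConnectedToOne {ι σ : Type*} (b : ι → σ →₀ ℕ) : Prop :=
  ∀ j, b j = 0 ∨ ∃ i j', b j = Finsupp.single i 1 + b j'

@[elab_as_elim]
theorem IsConnectedToOne.induction {ι σ : Type*} {b : ι → σ →₀ ℕ} (hb : IsConnectedToOne b)
    {P : ι → Prop} (zero : ∀ j, b j = 0 → P j)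
    (step : ∀ i j j', b j = Finsupp.single i 1 + b j' → P j' → P j) (j : ι) : P j := by
  induction h : (b j).degree using Nat.strong_induction_on generalizing j with
  | _ d ih =>
    obtain hj | ⟨i, j', hj⟩ := hb j
    · exact zero j hj
    · refine step i j j' hj (ih _ ?_ j' rfl)
      rw [← h, hj, map_add, Finsupp.degree_single]
      omega

section ConnectedMonomials

variable {σ ι K : Type*} [CommSemiring K] {b : ι → σ →₀ ℕ} {V : Submodule K (MvPolynomial σ K)}
  (hmem : ∀ j, monomial (b j) (1 : K) ∈ V)

theorem span_range_monomial_eq_top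
    (hV : V = Submodule.span K (Set.range fun j => monomial (b j) (1 : K))) :
    Submodule.span K (Set.range fun j => (⟨monomial (b j) 1, hmem j⟩ : V)) = ⊤ := by
  subst hV
  convert Submodule.span_span_coe_preimage
  ext x
  simp [Subtype.ext_iff]

variable [Fintype σ] (M : σ → Module.End K V) (hM : ∀ i i', Commute (M i) (M i'))

theorem evalMonomial_apply_one (hb : IsConnectedToOne b) (hone : 1 ∈ V)
    (hMx : ∀ i j j', b j' = Finsupp.single i 1 + b j →
      M i ⟨monomial (b j) 1, hmem j⟩ = ⟨monomial (b j') 1, hmem j'⟩) (j : ι) :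
    evalMonomial M hM (b j) ⟨1, hone⟩ = ⟨monomial (b j) 1, hmem j⟩ := by
  refine hb.induction (fun j hj => ?_) (fun i j j' hj ih => ?_) j
  · ext
    simp [hj, evalMonomial_zero]
  · rw [← hMx i j' j hj, ← ih, ← Module.End.mul_apply, ← evalMonomial_single_one_add, hj]

theorem dual_evalMonomial_apply (hb : IsConnectedToOne b)
    (hV : V = Submodule.span K (Set.range fun j => monomial (b j) (1 : K)))
    (Λ : Module.Dual K (MvPolynomial σ K))
    (hcompat : ∀ i j j', Λ (X i * (monomial (b j) 1 * monomial (b j') 1))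
      = Λ (monomial (b j) 1 * (M i ⟨monomial (b j') 1, hmem j'⟩ : MvPolynomial σ K)))
    (j : ι) (v : V) :
    Λ (evalMonomial M hM (b j) v : MvPolynomial σ K)
      = Λ (monomial (b j) 1 * (v : MvPolynomial σ K)) := by
  revert v
  refine hb.induction (fun j hj => ?_) (fun i j j' hj ih => ?_) j
  · simp [hj, evalMonomial_zero]
  suffices Λ ∘ₗ V.subtype ∘ₗ evalMonomial M hM (b j)
      = Λ ∘ₗ LinearMap.mulLeft K (monomial (b j) 1) ∘ₗ V.subtype from
    fun v => LinearMap.congr_fun this v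
  refine LinearMap.ext_on (span_range_monomial_eq_top hmem hV) ?_
  rintro _ ⟨k, rfl⟩
  have hsplit : evalMonomial M hM (b j) = evalMonomial M hM (b j') * M i := by
    rw [hj, evalMonomial_single_one_add]
    exact (commute_evalMonomial M hM i _).eq
  calc Λ (evalMonomial M hM (b j) ⟨monomial (b k) 1, hmem k⟩)
      = Λ (monomial (b j') 1 * (M i ⟨monomial (b k) 1, hmem k⟩ : MvPolynomial σ K)) := by
        rw [hsplit, Module.End.mul_apply, ih]
    _ = Λ (X i * (monomial (b j') 1 * monomial (b k) 1)) := (hcompat i j' k).symm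
    _ = Λ (monomial (b j) 1 * monomial (b k) 1) := by
        rw [← mul_assoc, X, monomial_mul, one_mul, ← hj]

end ConnectedMonomials

/-- If the operators `M_i` on `⟨B⟩` (with `B` a monomial set connected to 1) pairwise
commute, send `m` to `x_i m` whenever `x_i m ∈ B`, and are compatible with `Λ`
(`Λ(x_i b'' b') = Λ(b'' M_i(b'))`), then the extension `Λ̃(p) = Λ(p(M)(1))` satisfies
`Λ̃(b b') = Λ(b b')` for all `b, b' ∈ B`. -/
theorem extension_agrees_on_products (K : Type*) [Field K] (n r : ℕ)
    (b : Fin r → (Fin n →₀ ℕ))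
    (hconn : ∀ j, b j = 0 ∨ ∃ (i : Fin n) (j' : Fin r), b j = Finsupp.single i 1 + b j')
    (V : Submodule K (MvPolynomial (Fin n) K))
    (hV : V = Submodule.span K
      (Set.range fun j => (monomial (b j) (1 : K) : MvPolynomial (Fin n) K)))
    (hone : (1 : MvPolynomial (Fin n) K) ∈ V)
    (hmem : ∀ j, (monomial (b j) (1 : K) : MvPolynomial (Fin n) K) ∈ V)
    (M : Fin n → Module.End K ↥V)
    (hcomm : ∀ i i', Commute (M i) (M i'))
    (hMx : ∀ (i : Fin n) (j j' : Fin r), b j' = Finsupp.single i 1 + b j →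
      M i ⟨monomial (b j) 1, hmem j⟩ = ⟨monomial (b j') 1, hmem j'⟩)
    (Λ : Module.Dual K (MvPolynomial (Fin n) K))
    (hcompat : ∀ (i : Fin n) (j j' : Fin r),
      Λ (X i * (monomial (b j) 1 * monomial (b j') 1))
        = Λ (monomial (b j) 1 *
            ((M i ⟨monomial (b j') 1, hmem j'⟩ : ↥V) : MvPolynomial (Fin n) K))) :
    ∀ j j' : Fin r,
      Λ (((Finset.univ.noncommProd (fun i => M i ^ ((b j + b j') i))
            (fun i _ i' _ _ => (hcomm i i').pow_pow _ _)) ⟨1, hone⟩ :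
          ↥V) : MvPolynomial (Fin n) K)
        = Λ (monomial (b j) 1 * monomial (b j') 1) := by
  intro j j'
  change Λ (evalMonomial M hcomm (b j + b j') ⟨1, hone⟩ : MvPolynomial (Fin n) K) = _
  rw [evalMonomial_add, Module.End.mul_apply, evalMonomial_apply_one hmem M hcomm hconn hone hMx]
  exact dual_evalMonomial_apply hmem M hcomm hconn hV Λ hcompat j _
end
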